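/- Let t = (t_{i,j,k})_{1 ≤ i < j < k ≤ n} be a family of integers such that the normal form map N_t : ℤ^n → G(t) is bijective, and let m : ℤ^n × ℤ^n → ℤ^n be the multiplication function defined by N_t(m(x, y)) = N_t(x)·N_t(y). Then for all x, y ∈ ℤ^n, the n-th coordinate satisfies m_n(x, y) = x_n + y_n + m_n(x̄, ȳ), where x̄ and ȳ are obtained from x and y by replacing their n-th coordinates with 0. In particular, m_n(x, y) − x_n − y_n depends only on the first n−1 coordinates of x and y. -/

import Mathlib

/-! The last generator `a_n` is central: its defining relations `a_n a_i = a_i a_n` have no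
tail. Hence `N x = N x̄ · a_n ^ x_n`, and
`N x · N y = N x̄ · N ȳ · a_n ^ (x_n + y_n) = N (m (x̄, ȳ)) · a_n ^ (x_n + y_n)`, which is the
normal form of `m (x̄, ȳ)` with last coordinate increased by `x_n + y_n`. Injectivity of `N`
concludes. -/

namespace HallPoly

/-- The ordered product `g_1^{e_1} ⋯ g_n^{e_n}` taken in increasing order of indices. -/
def prodPow {Γ : Type*} [Group Γ] (n : ℕ) (g : Fin n → Γ) (e : Fin n → ℤ) : Γ :=
  ((List.finRange n).map fun k => g k ^ e k).prod

/-- The relators of the presented group `G(t)`: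
`(a_i · a_j · a_{j+1}^{t_{i,j,j+1}} ⋯ a_n^{t_{i,j,n}})⁻¹ · (a_j · a_i)` for `1 ≤ i < j ≤ n`. -/
def rels (n : ℕ) (t : Fin n → Fin n → Fin n → ℤ) : Set (FreeGroup (Fin n)) :=
  { r | ∃ i j : Fin n, i < j ∧
      r = (FreeGroup.of i * FreeGroup.of j *
            prodPow n FreeGroup.of (fun k => if j < k then t i j k else 0))⁻¹ *
          (FreeGroup.of j * FreeGroup.of i) }

/-- The presented group `G(t)` with generators `a_1, …, a_n` and relations
`a_j·a_i = a_i·a_j·a_{j+1}^{t_{i,j,j+1}} ⋯ a_n^{t_{i,j,n}}` for `1 ≤ i < j ≤ n`. -/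
abbrev G (n : ℕ) (t : Fin n → Fin n → Fin n → ℤ) : Type := PresentedGroup (rels n t)

/-- The generators `a_1, …, a_n` of `G(t)`. -/
def a (n : ℕ) (t : Fin n → Fin n → Fin n → ℤ) (i : Fin n) : G n t :=
  PresentedGroup.of i

/-- The normal form map `N_t : ℤⁿ → G(t)`, `x ↦ a_1^{x_1} ⋯ a_n^{x_n}`. -/
def N (n : ℕ) (t : Fin n → Fin n → Fin n → ℤ) (x : Fin n → ℤ) : G n t :=
  prodPow n (a n t) x

section prodPow

variable {Γ : Type*} [Group Γ]

lemma map_prodPow {Δ : Type*} [Group Δ] (f : Γ →* Δ) (n : ℕ) (g : Fin n → Γ) (e : Fin n → ℤ) :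
    f (prodPow n g e) = prodPow n (f ∘ g) e := by
  simp [prodPow, map_list_prod, Function.comp_def]

lemma prodPow_zero (n : ℕ) (g : Fin n → Γ) : prodPow n g 0 = 1 := by
  simp [prodPow]

lemma prodPow_succ (m : ℕ) (g : Fin (m + 1) → Γ) (e : Fin (m + 1) → ℤ) :
    prodPow (m + 1) g e =
      prodPow m (g ∘ Fin.castSucc) (e ∘ Fin.castSucc) * g (Fin.last m) ^ e (Fin.last m) := by
  simp [prodPow, List.finRange_succ_last, Function.comp_def]

lemma prodPow_update_last (m : ℕ) (g : Fin (m + 1) → Γ) (e : Fin (m + 1) → ℤ) (c : ℤ) :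
    prodPow (m + 1) g (Function.update e (Fin.last m) c) =
      prodPow (m + 1) g (Function.update e (Fin.last m) 0) * g (Fin.last m) ^ c := by
  simp [prodPow_succ, Function.comp_def, Fin.castSucc_ne_last]

lemma prodPow_eq_update_last_mul (m : ℕ) (g : Fin (m + 1) → Γ) (e : Fin (m + 1) → ℤ) :
    prodPow (m + 1) g e =
      prodPow (m + 1) g (Function.update e (Fin.last m) 0) * g (Fin.last m) ^ e (Fin.last m) := by
  rw [← prodPow_update_last, Function.update_eq_self]

end prodPow

lemma a_mul_a_of_lt {n : ℕ} (t : Fin n → Fin n → Fin n → ℤ) {i j : Fin n} (hij : i < j) :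
    a n t j * a n t i =
      a n t i * a n t j * prodPow n (a n t) (fun k => if j < k then t i j k else 0) := by
  have := PresentedGroup.mk_eq_mk_of_inv_mul_mem (rels := rels n t) ⟨i, j, hij, rfl⟩
  rw [map_mul, map_mul, map_mul, map_prodPow] at this
  exact this.symm

lemma a_last_commute (m : ℕ) (t : Fin (m + 1) → Fin (m + 1) → Fin (m + 1) → ℤ) (i : Fin (m + 1)) :
    Commute (a (m + 1) t (Fin.last m)) (a (m + 1) t i) := by
  rcases (Fin.le_last i).eq_or_lt with rfl | hi
  · rfl
  · have htail : (fun k : Fin (m + 1) => if Fin.last m < k then t i (Fin.last m) k else 0) = 0 := by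
      funext k
      simp [(Fin.le_last k).not_gt]
    show _ * _ = _ * _
    simpa [htail, prodPow_zero] using a_mul_a_of_lt t hi

lemma a_last_mem_center (m : ℕ) (t : Fin (m + 1) → Fin (m + 1) → Fin (m + 1) → ℤ) :
    a (m + 1) t (Fin.last m) ∈ Subgroup.center (G (m + 1) t) := by
  rw [← Subgroup.centralizer_univ, ← Subgroup.coe_top, ← PresentedGroup.closure_range_of,
    Subgroup.centralizer_closure]
  rintro _ ⟨i, rfl⟩
  exact (a_last_commute m t i).symm.eq

/-- Remark 4.4: if `G(t)` is consistent and `mul` is the multiplication function on normal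
form exponent vectors (defined by `N_t (mul x y) = N_t x · N_t y`), then the last coordinate
satisfies `mul x y n = x n + y n + mul x̄ ȳ n`, where `x̄, ȳ` are obtained from `x, y` by
setting the last coordinate to `0`.  In particular `mul x y n - x n - y n` depends only on
the first `n - 1` coordinates of `x` and `y`. -/
theorem mul_last_coordinate (m : ℕ) (t : Fin (m + 1) → Fin (m + 1) → Fin (m + 1) → ℤ)
    (hN : Function.Bijective (N (m + 1) t))
    (mul : (Fin (m + 1) → ℤ) → (Fin (m + 1) → ℤ) → (Fin (m + 1) → ℤ))
    (hmul : ∀ x y : Fin (m + 1) → ℤ, N (m + 1) t (mul x y) = N (m + 1) t x * N (m + 1) t y) :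
    ∀ x y : Fin (m + 1) → ℤ,
      mul x y (Fin.last m) =
        x (Fin.last m) + y (Fin.last m) +
          mul (Function.update x (Fin.last m) 0) (Function.update y (Fin.last m) 0)
            (Fin.last m) := by
  intro x y
  set L := Fin.last m
  set w := mul (Function.update x L 0) (Function.update y L 0)
  set z := a (m + 1) t L
  have hz : ∀ g : G (m + 1) t, z ^ x L * g = g * z ^ x L := fun g =>
    (Subgroup.mem_center_iff.mp (Subgroup.zpow_mem _ (a_last_mem_center m t) _) g).symm
  suffices N (m + 1) t (mul x y) = N (m + 1) t (Function.update w L (w L + x L + y L)) by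
    rw [hN.injective this, Function.update_self]
    ring
  simp only [N] at hmul ⊢
  calc prodPow (m + 1) (a (m + 1) t) (mul x y)
      = prodPow (m + 1) (a (m + 1) t) (Function.update x L 0) * z ^ x L *
          (prodPow (m + 1) (a (m + 1) t) (Function.update y L 0) * z ^ y L) := by
        rw [hmul, ← prodPow_eq_update_last_mul, ← prodPow_eq_update_last_mul]
    _ = prodPow (m + 1) (a (m + 1) t) w * z ^ (x L + y L) := by
        rw [hmul, zpow_add, mul_assoc, ← mul_assoc (z ^ x L), hz]
        group
    _ = prodPow (m + 1) (a (m + 1) t) (Function.update w L (w L + x L + y L)) := by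
        rw [prodPow_update_last, prodPow_eq_update_last_mul _ _ w, mul_assoc, ← zpow_add,
          add_assoc]

end HallPoly
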